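/- For all m ≥ 1 and i ∈ {1,2}: (1) E_{m,1} is a factor of E_{m',i} for every m' ≥ m; (2) E_{m,2} is NOT a factor of E_{m+1,1} and not a factor of E_{m+1,2}; (3) E_{m,2} is a factor of E_{m'+2,i} for every m' ≥ m. -/

import Mathlib

namespace PD

/-- The period-doubling substitution on the alphabet `Bool`,
where `false` stands for the letter `a` and `true` for the letter `b`:
`σ(a) = ab`, `σ(b) = aa`. -/
def sub : Bool → List Bool
  | false => [false, true]
  | true  => [false, false]

/-- The substitution applied to a finite word. -/
def subW (w : List Bool) : List Bool := w.flatMap sub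

/-- `A m = σ^m(a)`. -/
def A (m : ℕ) : List Bool := subW^[m] [false]

/-- `B m = σ^m(b)`. -/
def B (m : ℕ) : List Bool := subW^[m] [true]

/-- The doubling sequence `D∞` (0-indexed: `D n` is the `(n+1)`-th letter),
the fixed point of `σ` beginning with `a`; `A m` is a prefix of `A (m+1)`,
and `A (n+1)` has length `2^(n+1) > n`. -/
def D (n : ℕ) : Bool := (A (n + 1)).getD n false

/-- `δ m`, the last letter of `A m`. -/
def delta (m : ℕ) : Bool := (A m).getLastD false

/-- The envelope words (`i ∈ {1,2}`): `E m 1 = A m` minus its last letter,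
`E m 2 = A (m-1) ++ (A m` minus its last letter `)`. -/
def E (m i : ℕ) : List Bool :=
  if i = 1 then (A m).dropLast else A (m - 1) ++ (A m).dropLast

/-- `w` occurs at the (1-indexed) position `j` in the finite word `τ`. -/
def OccursIn (w τ : List Bool) (j : ℕ) : Prop :=
  1 ≤ j ∧ (τ.drop (j - 1)).take w.length = w

/-- `w` occurs at the (1-indexed) position `j` in the doubling sequence. -/
def OccursD (w : List Bool) (j : ℕ) : Prop :=
  1 ≤ j ∧ ∀ k < w.length, D (j - 1 + k) = w.getD k false

/-- `w` is a factor of the doubling sequence. -/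
def FactorD (w : List Bool) : Prop := ∃ j, OccursD w j

/-- `L w p`: the (1-indexed) starting position of the `p`-th occurrence of `w`
in the doubling sequence, occurrences being ordered by starting position.
(Each factor occurs infinitely often, so `Nat.nth` enumerates all occurrences
in increasing order.) -/
noncomputable def L (w : List Bool) (p : ℕ) : ℕ := Nat.nth (OccursD w) (p - 1)

/-- The strict total order on envelope words:
`E m₁ i₁ ⊏ E m₂ i₂` iff `m₁ < m₂`, or `m₁ = m₂` and `i₁ < i₂`. -/
def EnvLt (m₁ i₁ m₂ i₂ : ℕ) : Prop := m₁ < m₂ ∨ (m₁ = m₂ ∧ i₁ < i₂)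

/-- `Env(w) = E m i`: the envelope word `E m i` is the `⊏`-minimal envelope
word containing `w` as a factor. -/
def IsEnv (w : List Bool) (m i : ℕ) : Prop :=
  1 ≤ m ∧ (i = 1 ∨ i = 2) ∧ w <:+: E m i ∧
    ∀ m' i', 1 ≤ m' → (i' = 1 ∨ i' = 2) → EnvLt m' i' m i → ¬ w <:+: E m' i'

/-- The substitution `φ₁(a) = a`, `φ₁(b) = bb`. -/
def phi1 : Bool → List Bool
  | false => [false]
  | true  => [true, true]

/-- `Θ₁ = φ₁(D∞)` (0-indexed): `φ₁(A (n+1))` is a prefix of `Θ₁` of length `> n`. -/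
def Theta1 (n : ℕ) : Bool := ((A (n + 1)).flatMap phi1).getD n false

/-- The substitution `φ₂(a) = ab`, `φ₂(b) = acac`, over the alphabet `Fin 3`
where `0` stands for `a`, `1` for `b` and `2` for `c`. -/
def phi2 : Bool → List (Fin 3)
  | false => [0, 1]
  | true  => [0, 2, 0, 2]

/-- `Θ₂ = φ₂(D∞)` (0-indexed). -/
def Theta2 (n : ℕ) : Fin 3 := ((A (n + 1)).flatMap phi2).getD n 0

/-- `N₁(x,p)`: the number of letters `x` among the first `p` letters of `Θ₁`. -/
def N1 (x : Bool) (p : ℕ) : ℕ := ((List.range p).map Theta1).count x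

/-- `N₂(x,p)`: the number of letters `x` among the first `p` letters of `Θ₂`. -/
def N2 (x : Fin 3) (p : ℕ) : ℕ := ((List.range p).map Theta2).count x

end PD

/-!
Both kinds of envelope words reproduce under `w ↦ σ(w) a`: `E_{m+1,i} = σ(E_{m,i}) a`
(for `i = 2` once `m ≥ 1`). This map preserves factors, and reflects them on words beginning
with `a`. Each of the three claims therefore follows by induction on `m` from its smallest case,
which is a finite computation (for (1) the base is `E_{0,1}`, the empty word).
-/

namespace PD

def subWa (w : List Bool) : List Bool := subW w ++ [false]

lemma sub_eq (b : Bool) : sub b = [false, !b] := by cases b <;> rfl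

lemma subW_nil : subW [] = [] := rfl

lemma subW_cons (b : Bool) (w : List Bool) : subW (b :: w) = false :: (!b) :: subW w := by
  rw [subW, List.flatMap_cons, sub_eq]
  rfl

lemma subW_append (u v : List Bool) : subW (u ++ v) = subW u ++ subW v :=
  List.flatMap_append

lemma length_subW (w : List Bool) : (subW w).length = 2 * w.length := by
  induction w with
  | nil => rfl
  | cons b w ih => simp only [subW_cons, List.length_cons, ih]; ring

lemma subWa_nil : subWa [] = [false] := rfl

lemma subWa_cons (b : Bool) (w : List Bool) : subWa (b :: w) = false :: (!b) :: subWa w := by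
  rw [subWa, subW_cons]
  rfl

lemma exists_subWa_eq_cons (w : List Bool) : ∃ r, subWa w = false :: r := by
  cases w with
  | nil => exact ⟨[], subWa_nil⟩
  | cons b w => exact ⟨_, subWa_cons b w⟩

lemma length_subWa (w : List Bool) : (subWa w).length = 2 * w.length + 1 := by
  rw [subWa, List.length_append, length_subW, List.length_singleton]

lemma prefix_of_subW_prefix_subW {x y : List Bool} (h : subW x <+: subW y) : x <+: y := by
  induction x generalizing y with
  | nil => exact List.nil_prefix
  | cons a x ih =>
    cases y with
    | nil => simp [subW_cons, subW_nil] at h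
    | cons b y =>
      rw [subW_cons, subW_cons, List.cons_prefix_cons, List.cons_prefix_cons] at h
      obtain ⟨-, hab, hxy⟩ := h
      rw [Bool.not_inj hab]
      exact List.cons_prefix_cons.mpr ⟨rfl, ih hxy⟩

lemma prefix_of_subWa_prefix_subWa {x y : List Bool} (h : subWa x <+: subWa y) : x <+: y := by
  have hx : subW x <+: subW y ++ [false] := (List.prefix_append _ _).trans h
  rcases List.prefix_concat_iff.mp hx with heq | hxy
  · have := congrArg List.length heq
    rw [List.length_append, length_subW, length_subW, List.length_singleton] at this
    omega
  · exact prefix_of_subW_prefix_subW hxy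

lemma subWa_infix_subWa {x y : List Bool} (h : x <:+: y) : subWa x <:+: subWa y := by
  obtain ⟨s, t, rfl⟩ := h
  obtain ⟨r, hr⟩ := exists_subWa_eq_cons t
  refine ⟨subW s, r, ?_⟩
  show subW s ++ subWa x ++ r = subW (s ++ x ++ t) ++ [false]
  rw [subW_append, subW_append, List.append_assoc _ (subW t), ← subWa, hr]
  simp only [subWa, List.append_assoc, List.cons_append, List.nil_append]

/-- Since `x` begins with `a`, `σ(x) a` has a `b` at index 1, while `σ(y) a` has `a` at every
even index; so an occurrence of `σ(x) a` in `σ(y) a` starts on a block boundary of `σ`. -/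
lemma infix_of_subWa_infix_subWa {x y : List Bool} (hx : x.head? = some false)
    (h : subWa x <:+: subWa y) : x <:+: y := by
  obtain ⟨x, rfl⟩ : ∃ x', x = false :: x' := ⟨x.tail, List.eq_cons_of_mem_head? hx⟩
  obtain ⟨s, u, h⟩ := h
  induction y generalizing s with
  | nil =>
    have := congrArg List.length h
    simp only [List.length_append, length_subWa, List.length_cons, List.length_nil] at this
    omega
  | cons b y ih =>
    rw [subWa_cons, subWa_cons] at h
    match s, h with
    | [], h =>
      have hpre : subWa (false :: x) <+: subWa (b :: y) := by
        rw [subWa_cons, subWa_cons]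
        exact ⟨u, h⟩
      exact (prefix_of_subWa_prefix_subWa hpre).isInfix
    | [c], h =>
      obtain ⟨r, hr⟩ := exists_subWa_eq_cons y
      simp [hr] at h
    | c :: d :: s, h =>
      simp only [List.cons_append, List.cons.injEq] at h
      exact List.infix_cons (ih s (by rw [← h.2.2, ← subWa_cons, List.append_assoc]))

lemma subWa_infix_subWa_iff {x y : List Bool} (hx : x.head? = some false) :
    subWa x <:+: subWa y ↔ x <:+: y :=
  ⟨infix_of_subWa_infix_subWa hx, subWa_infix_subWa⟩

lemma A_succ (m : ℕ) : A (m + 1) = subW (A m) :=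
  Function.iterate_succ_apply' subW m [false]

lemma exists_A_eq_cons (m : ℕ) : ∃ r, A m = false :: r := by
  induction m with
  | zero => exact ⟨[], rfl⟩
  | succ m ih =>
    obtain ⟨r, hr⟩ := ih
    rw [A_succ, hr, subW_cons]
    exact ⟨_, rfl⟩

lemma A_ne_nil (m : ℕ) : A m ≠ [] := by
  obtain ⟨r, hr⟩ := exists_A_eq_cons m
  rw [hr]
  exact List.cons_ne_nil _ _

lemma dropLast_subW {w : List Bool} (hw : w ≠ []) : (subW w).dropLast = subWa w.dropLast := by
  conv_lhs => rw [← List.dropLast_append_getLast hw]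
  rw [subW_append, subW_cons, subW_nil, subWa,
    show [false, !w.getLast hw] = [false] ++ [!w.getLast hw] from rfl,
    ← List.append_assoc, List.dropLast_concat]

lemma dropLast_A_succ (m : ℕ) : (A (m + 1)).dropLast = subWa (A m).dropLast := by
  rw [A_succ, dropLast_subW (A_ne_nil m)]

lemma E_one (m : ℕ) : E m 1 = (A m).dropLast := if_pos rfl

lemma E_two (m : ℕ) : E m 2 = A (m - 1) ++ (A m).dropLast := if_neg (by norm_num)

lemma E_one_succ (m : ℕ) : E (m + 1) 1 = subWa (E m 1) := by
  rw [E_one, E_one, dropLast_A_succ]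

lemma E_two_succ {m : ℕ} (hm : 1 ≤ m) : E (m + 1) 2 = subWa (E m 2) := by
  obtain ⟨k, rfl⟩ := Nat.exists_eq_add_of_le' hm
  rw [E_two, E_two, Nat.add_sub_cancel, Nat.add_sub_cancel, dropLast_A_succ, A_succ, subWa,
    subWa, subW_append, List.append_assoc]

lemma head?_E_two (m : ℕ) : (E m 2).head? = some false := by
  obtain ⟨r, hr⟩ := exists_A_eq_cons (m - 1)
  rw [E_two, hr, List.cons_append, List.head?_cons]

lemma E_one_infix_E_two (m : ℕ) : E m 1 <:+: E m 2 := by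
  rw [E_one, E_two]
  exact (List.suffix_append _ _).isInfix

lemma E_one_infix {i : ℕ} (hi : i = 1 ∨ i = 2) (m : ℕ) : E m 1 <:+: E m i := by
  rcases hi with rfl | rfl
  exacts [List.infix_refl _, E_one_infix_E_two m]

lemma infix_E_two {i : ℕ} (hi : i = 1 ∨ i = 2) (m : ℕ) : E m i <:+: E m 2 := by
  rcases hi with rfl | rfl
  exacts [E_one_infix_E_two m, List.infix_refl _]

lemma E_one_infix_E_one_succ (m : ℕ) : E m 1 <:+: E (m + 1) 1 := by
  induction m with
  | zero => exact List.nil_infix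
  | succ m ih =>
    simpa only [E_one_succ] using subWa_infix_subWa ih

lemma E_one_infix_E_one {m m' : ℕ} (h : m ≤ m') : E m 1 <:+: E m' 1 := by
  induction m', h using Nat.le_induction with
  | base => exact List.infix_refl _
  | succ n _ ih => exact ih.trans (E_one_infix_E_one_succ n)

lemma E_two_infix_E_one_add_two {m : ℕ} (hm : 1 ≤ m) : E m 2 <:+: E (m + 2) 1 := by
  induction m, hm using Nat.le_induction with
  | base => decide
  | succ n hn ih =>
    rw [E_two_succ hn, E_one_succ (n + 2)]
    exact subWa_infix_subWa ih

lemma not_E_two_infix_E_two_succ {m : ℕ} (hm : 1 ≤ m) : ¬ E m 2 <:+: E (m + 1) 2 := by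
  induction m, hm using Nat.le_induction with
  | base => decide
  | succ n hn ih =>
    rwa [E_two_succ hn, E_two_succ (by omega : 1 ≤ n + 1),
      subWa_infix_subWa_iff (head?_E_two n)]

end PD

open PD
/-- For every `m ≥ 1` and `i ∈ {1,2}`: (1) `E m 1` is a factor of `E m' i` for all
`m' ≥ m`; (2) `E m 2` is not a factor of `E (m+1) i`; (3) `E m 2` is a factor of
`E (m'+2) i` for all `m' ≥ m`. -/
theorem doubling_envelope_factors (m : ℕ) (hm : 1 ≤ m) :
    (∀ m', m ≤ m' → ∀ i : ℕ, i = 1 ∨ i = 2 → E m 1 <:+: E m' i) ∧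
      (∀ i : ℕ, i = 1 ∨ i = 2 → ¬ E m 2 <:+: E (m + 1) i) ∧
      (∀ m', m ≤ m' → ∀ i : ℕ, i = 1 ∨ i = 2 → E m 2 <:+: E (m' + 2) i) := by
  refine ⟨fun m' h i hi => (E_one_infix_E_one h).trans (E_one_infix hi m'),
    fun i hi h => not_E_two_infix_E_two_succ hm (h.trans (infix_E_two hi (m + 1))),
    fun m' h i hi => (E_two_infix_E_one_add_two hm).trans
      ((E_one_infix_E_one (by omega)).trans (E_one_infix hi (m' + 2)))⟩
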